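/- arXiv:2402.07194 — 3 statements merged into one kernel-verified Lean document; each statement's English description precedes it below -/
import Mathlib

section
/- Let G and H be simple graphs, neither of which is a complete graph. Then for any two vertices (g,h) and (g',h') of the modular product G⋄H, either d_{G⋄H}((g,h),(g',h')) ≤ 3, or there is no path between (g,h) and (g',h') in G⋄H and both G and H are a disjoint union of two cliques. -/
open SimpleGraph

/-- The closed neighborhood `N[v]` of a vertex. -/
def closedNbr {α : Type*} (G : SimpleGraph α) (v : α) : Set α :=
  insert v (G.neighborSet v)

/-- The modular product `G ⋄ H`. -/
def modularProduct {α β : Type*} (G : SimpleGraph α) (H : SimpleGraph β) :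
    SimpleGraph (α × β) :=
  SimpleGraph.fromRel (fun x y =>
    (x.1 = y.1 ∧ H.Adj x.2 y.2) ∨
    (G.Adj x.1 y.1 ∧ x.2 = y.2) ∨
    (G.Adj x.1 y.1 ∧ H.Adj x.2 y.2) ∨
    (x.1 ≠ y.1 ∧ x.2 ≠ y.2 ∧ ¬ G.Adj x.1 y.1 ∧ ¬ H.Adj x.2 y.2))

/-- `{g, g'}` is a `γ_G`-pair: the closed neighborhoods are disjoint and cover `V(G)`. -/
def gammaPair {α : Type*} (G : SimpleGraph α) (g g' : α) : Prop :=
  closedNbr G g ∩ closedNbr G g' = ∅ ∧ closedNbr G g ∪ closedNbr G g' = Set.univ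

/-- A universal vertex. -/
def IsUniversal {α : Type*} (G : SimpleGraph α) (v : α) : Prop :=
  closedNbr G v = Set.univ

/-- A complete graph: every two distinct vertices are adjacent. -/
def IsCompleteGraph {α : Type*} (G : SimpleGraph α) : Prop :=
  ∀ u v : α, u ≠ v → G.Adj u v

/-- `G` is a disjoint union of two cliques. -/
def TwoCliques {α : Type*} (G : SimpleGraph α) : Prop :=
  ∃ A B : Set α, A.Nonempty ∧ B.Nonempty ∧ A ∪ B = Set.univ ∧ A ∩ B = ∅ ∧
    (∀ u ∈ A, ∀ v ∈ A, u ≠ v → G.Adj u v) ∧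
    (∀ u ∈ B, ∀ v ∈ B, u ≠ v → G.Adj u v) ∧
    (∀ u ∈ A, ∀ v ∈ B, ¬ G.Adj u v)

/-- `u` and `v` are mutually maximally distant in `X`. -/
def MMD {α : Type*} (X : SimpleGraph α) (u v : α) : Prop :=
  (∀ w, X.Adj u w → X.edist w v ≤ X.edist u v) ∧
  (∀ w, X.Adj v w → X.edist w u ≤ X.edist u v)

/-- A strong resolving set of `X`. -/
def IsStrongResolvingSet {α : Type*} (X : SimpleGraph α) (S : Set α) : Prop :=
  ∀ u v : α, u ≠ v → ∃ w ∈ S,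
    X.dist u w = X.dist u v + X.dist v w ∨ X.dist v w = X.dist v u + X.dist u w

/-- The strong metric dimension of `X`. -/
noncomputable def sdim {α : Type*} (X : SimpleGraph α) : ℕ :=
  sInf {n | ∃ S : Set α, S.ncard = n ∧ IsStrongResolvingSet X S}

/-- The star `K_{1,n}`: the center is `none`, the leaves are `some i`. -/
def starGraph (n : ℕ) : SimpleGraph (Option (Fin n)) :=
  SimpleGraph.fromRel (fun u v => u = none ∧ v ≠ none)

/-- The vertex cover number `β(X)`. -/
noncomputable def vertexCoverNumber {γ : Type*} (X : SimpleGraph γ) : ℕ :=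
  sInf {n | ∃ C : Set γ, C.ncard = n ∧ ∀ u v, X.Adj u v → u ∈ C ∨ v ∈ C}

/-!
Write `x = (g, h)` and `y = (g', h')`. Exchanging the factors if necessary, `g = g'` or `g ~ g'`,
while `h ≠ h'` are non-adjacent. If `d(x, y) > 3`, every walk of length two or three that one
could build from the four kinds of edges of `G ⋄ H` is blocked, and each blocked walk is a
structural constraint: `N[g] = N[g']`; some vertex lies outside `N[g]` (otherwise `g, g'` are
universal and a non-edge `uv` of `G` gives the walk `(g,h) (u,h) (v,h') (g',h')`); `N[g]` and its
complement are cliques with no edges between them; and `N[h]`, `N[h']` are cliques covering `H`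
with no edges between them. So `G` splits into cliques `A ∋ g, g'` and `Aᶜ`, `H` into cliques
`B ∋ h` and `Bᶜ ∋ h'`, and the truth value of `u ∈ A ↔ v ∈ B` is constant along the edges of
`G ⋄ H` but differs at `x` and `y`.
-/

section

variable {α β γ : Type*}

namespace SimpleGraph

variable {X : SimpleGraph γ} {u v w z : γ}

lemma edist_le_two_of_adj_of_adj (huv : X.Adj u v) (hvw : X.Adj v w) : X.edist u w ≤ 2 :=
  (edist_le (.cons huv (.cons hvw .nil))).trans (by simp)

lemma edist_le_three_of_adj_of_adj_of_adj (huv : X.Adj u v) (hvw : X.Adj v w)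
    (hwz : X.Adj w z) : X.edist u z ≤ 3 :=
  (edist_le (.cons huv (.cons hvw (.cons hwz .nil)))).trans (by simp)

lemma Hom.edist_le {Y : SimpleGraph β} (f : X →g Y) (u v : γ) :
    Y.edist (f u) (f v) ≤ X.edist u v := by
  by_cases huv : X.Reachable u v
  · obtain ⟨p, hp⟩ := huv.exists_walk_length_eq_edist
    rw [← hp, ← p.length_map f]
    exact (p.map f).edist_le
  · simp [edist_eq_top_of_not_reachable huv]

lemma adj_iff_mem_iff_mem_of_isClique {S T : Set γ} (hST : ∀ v, v ∈ S ∨ v ∈ T)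
    (hS : X.IsClique S) (hT : X.IsClique T) (hcross : ∀ u ∈ S, ∀ v ∈ T, ¬X.Adj u v)
    (huv : u ≠ v) : X.Adj u v ↔ (u ∈ S ↔ v ∈ S) := by
  by_cases hu : u ∈ S <;> by_cases hv : v ∈ S
  · simpa [hu, hv] using hS hu hv huv
  · simpa [hu, hv] using hcross u hu v ((hST v).resolve_left hv)
  · simpa [hu, hv] using fun h => hcross v hv u ((hST u).resolve_left hu) h.symm
  · simpa [hu, hv] using hT ((hST u).resolve_left hu) ((hST v).resolve_left hv) huv

end SimpleGraph

lemma twoCliques_of_adj_iff {X : SimpleGraph γ} {S : Set γ} (hS : S.Nonempty) (hSc : Sᶜ.Nonempty)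
    (hadj : ∀ u v, u ≠ v → (X.Adj u v ↔ (u ∈ S ↔ v ∈ S))) : TwoCliques X :=
  ⟨S, Sᶜ, hS, hSc, S.union_compl_self, S.inter_compl_self,
    fun u hu v hv huv => (hadj u v huv).2 (iff_of_true hu hv),
    fun u hu v hv huv => (hadj u v huv).2 (iff_of_false hu hv),
    fun u hu v hv h => hv (((hadj u v h.ne).1 h).1 hu)⟩

lemma mem_closedNbr {G : SimpleGraph α} {v a : α} :
    a ∈ closedNbr G v ↔ a = v ∨ G.Adj v a :=
  Iff.rfl

lemma self_mem_closedNbr (G : SimpleGraph α) (v : α) : v ∈ closedNbr G v :=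
  Set.mem_insert v _

section ModularProduct

variable {G : SimpleGraph α} {H : SimpleGraph β} {a a' : α} {b b' : β}

lemma modularProduct_adj {x y : α × β} :
    (modularProduct G H).Adj x y ↔ x ≠ y ∧
      ((x.1 = y.1 ∧ H.Adj x.2 y.2) ∨ (G.Adj x.1 y.1 ∧ x.2 = y.2) ∨
        (G.Adj x.1 y.1 ∧ H.Adj x.2 y.2) ∨
        (x.1 ≠ y.1 ∧ x.2 ≠ y.2 ∧ ¬G.Adj x.1 y.1 ∧ ¬H.Adj x.2 y.2)) := by
  rw [modularProduct, fromRel_adj]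
  have := G.adj_comm x.1 y.1
  have := H.adj_comm x.2 y.2
  have := @eq_comm _ x.1 y.1
  have := @eq_comm _ x.2 y.2
  tauto

lemma modularProduct_not_adj_iff {x y : α × β} (hxy : x ≠ y) :
    ¬(modularProduct G H).Adj x y ↔
      ((x.1 = y.1 ∨ G.Adj x.1 y.1) ∧ x.2 ≠ y.2 ∧ ¬H.Adj x.2 y.2) ∨
        ((x.2 = y.2 ∨ H.Adj x.2 y.2) ∧ x.1 ≠ y.1 ∧ ¬G.Adj x.1 y.1) := by
  have := Prod.ext_iff.not.1 hxy
  rw [modularProduct_adj]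
  tauto

lemma modularProduct_adj_of_left (ha : G.Adj a a') : (modularProduct G H).Adj (a, b) (a', b) :=
  modularProduct_adj.2 ⟨by simp [ha.ne], .inr (.inl ⟨ha, rfl⟩)⟩

lemma modularProduct_adj_of_eq_or_adj (ha : a = a' ∨ G.Adj a a') (hb : H.Adj b b') :
    (modularProduct G H).Adj (a, b) (a', b') :=
  modularProduct_adj.2 ⟨by simp [hb.ne], ha.elim (fun h => .inl ⟨h, hb⟩)
    (fun h => .inr (.inr (.inl ⟨h, hb⟩)))⟩

lemma modularProduct_adj_of_not_adj (ha : a ≠ a') (hb : b ≠ b') (hna : ¬G.Adj a a')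
    (hnb : ¬H.Adj b b') : (modularProduct G H).Adj (a, b) (a', b') :=
  modularProduct_adj.2 ⟨by simp [ha], .inr (.inr (.inr ⟨ha, hb, hna, hnb⟩))⟩

variable (G H) in
def modularProductComm : modularProduct G H ≃g modularProduct H G where
  toEquiv := Equiv.prodComm α β
  map_rel_iff' := by
    intro x y
    simp only [Equiv.prodComm_apply, modularProduct_adj, Prod.fst_swap, Prod.snd_swap, ne_eq,
      Prod.swap_inj]
    tauto

lemma modularProduct_mem_iff_mem_iff_of_reachable {A : Set α} {B : Set β}
    (hA : ∀ u v, u ≠ v → (G.Adj u v ↔ (u ∈ A ↔ v ∈ A)))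
    (hB : ∀ u v, u ≠ v → (H.Adj u v ↔ (u ∈ B ↔ v ∈ B))) {x y : α × β}
    (hxy : (modularProduct G H).Reachable x y) : (x.1 ∈ A ↔ x.2 ∈ B) ↔ (y.1 ∈ A ↔ y.2 ∈ B) := by
  rw [reachable_iff_reflTransGen] at hxy
  induction hxy with
  | refl => rfl
  | tail _ hadj ih =>
    refine ih.trans ?_
    obtain ⟨-, h⟩ := modularProduct_adj.1 hadj
    rcases h with ⟨h1, h2⟩ | ⟨h1, h2⟩ | ⟨h1, h2⟩ | ⟨h1, h2, h3, h4⟩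
    · rw [h1, (hB _ _ h2.ne).1 h2]
    · rw [h2, (hA _ _ h1.ne).1 h1]
    · rw [(hA _ _ h1.ne).1 h1, (hB _ _ h2.ne).1 h2]
    · have := (hA _ _ h1).not.1 h3
      have := (hB _ _ h2).not.1 h4
      tauto

end ModularProduct

section ThreeLtEdist

variable {G : SimpleGraph α} {H : SimpleGraph β} {g g' : α} {h h' : β}

lemma adj_of_adj_of_three_lt_edist (hh : h ≠ h') (hn : ¬H.Adj h h')
    (hfar : 3 < (modularProduct G H).edist (g, h) (g', h')) {a : α} (hga : G.Adj g a)
    (ha : a ≠ g') : G.Adj g' a := by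
  by_contra hg'a
  exact hfar.not_ge <| (edist_le_two_of_adj_of_adj (modularProduct_adj_of_left hga)
    (modularProduct_adj_of_not_adj ha hh (fun e => hg'a e.symm) hn)).trans (by norm_num)

lemma closedNbr_eq_of_three_lt_edist (hg : g = g' ∨ G.Adj g g') (hh : h ≠ h')
    (hn : ¬H.Adj h h') (hfar : 3 < (modularProduct G H).edist (g, h) (g', h')) :
    closedNbr G g = closedNbr G g' := by
  have hfar' : 3 < (modularProduct G H).edist (g', h') (g, h) := by rwa [edist_comm]
  ext a
  simp only [mem_closedNbr]
  rcases hg with rfl | hg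
  · rfl
  by_cases hag : a = g
  · simp [hag, hg.symm]
  by_cases hag' : a = g'
  · simp [hag', hg]
  simp only [hag, hag', false_or]
  exact ⟨(adj_of_adj_of_three_lt_edist hh hn hfar · hag'),
    (adj_of_adj_of_three_lt_edist hh.symm (fun e => hn e.symm) hfar' · hag)⟩

lemma not_adj_of_adj_of_three_lt_edist (hg : g = g' ∨ G.Adj g g')
    (hfar : 3 < (modularProduct G H).edist (g, h) (g', h')) {t : β} (ht : H.Adj h t) :
    ¬H.Adj h' t := fun ht' =>
  hfar.not_ge <| (edist_le_two_of_adj_of_adj (modularProduct_adj_of_eq_or_adj (.inl rfl) ht)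
    (modularProduct_adj_of_eq_or_adj hg ht'.symm)).trans (by norm_num)

lemma exists_not_mem_closedNbr_of_three_lt_edist (hG : ¬IsCompleteGraph G)
    (hg : g = g' ∨ G.Adj g g') (hh : h ≠ h') (hn : ¬H.Adj h h')
    (hfar : 3 < (modularProduct G H).edist (g, h) (g', h')) : ∃ a, a ∉ closedNbr G g := by
  by_contra! hall
  have hall' : ∀ a, a ∈ closedNbr G g' := closedNbr_eq_of_three_lt_edist hg hh hn hfar ▸ hall
  obtain ⟨u, v, huv, hnuv⟩ : ∃ u v, u ≠ v ∧ ¬G.Adj u v := by simpa [IsCompleteGraph] using hG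
  have hgu : G.Adj g u := (mem_closedNbr.1 (hall u)).resolve_left <| by
    rintro rfl
    exact hnuv ((mem_closedNbr.1 (hall v)).resolve_left huv.symm)
  have hg'v : G.Adj g' v := (mem_closedNbr.1 (hall' v)).resolve_left <| by
    rintro rfl
    exact hnuv ((mem_closedNbr.1 (hall' u)).resolve_left huv).symm
  exact hfar.not_ge <| edist_le_three_of_adj_of_adj_of_adj (modularProduct_adj_of_left hgu)
    (modularProduct_adj_of_not_adj huv hh hnuv hn) (modularProduct_adj_of_left hg'v.symm)

lemma isClique_closedNbr_left_of_three_lt_edist (hg : g = g' ∨ G.Adj g g') (hh : h ≠ h')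
    (hn : ¬H.Adj h h') (hfar : 3 < (modularProduct G H).edist (g, h) (g', h')) :
    G.IsClique (closedNbr G g) := by
  have hN := closedNbr_eq_of_three_lt_edist hg hh hn hfar
  intro a ha a' ha' haa'
  rcases mem_closedNbr.1 ha with rfl | hga
  · exact (mem_closedNbr.1 ha').resolve_left (Ne.symm haa')
  rcases mem_closedNbr.1 ha' with rfl | -
  · exact hga.symm
  rw [hN] at ha ha'
  rcases mem_closedNbr.1 ha with rfl | -
  · exact (mem_closedNbr.1 ha').resolve_left (Ne.symm haa')
  rcases mem_closedNbr.1 ha' with rfl | hg'a'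
  · exact ((mem_closedNbr.1 ha).resolve_left haa').symm
  by_contra hnaa'
  exact hfar.not_ge <| edist_le_three_of_adj_of_adj_of_adj (modularProduct_adj_of_left hga)
    (modularProduct_adj_of_not_adj haa' hh hnaa' hn) (modularProduct_adj_of_left hg'a'.symm)

lemma isClique_compl_closedNbr_left_of_three_lt_edist (hg : g = g' ∨ G.Adj g g') (hh : h ≠ h')
    (hn : ¬H.Adj h h') (hfar : 3 < (modularProduct G H).edist (g, h) (g', h')) :
    G.IsClique (closedNbr G g)ᶜ := by
  have hN := closedNbr_eq_of_three_lt_edist hg hh hn hfar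
  intro b hb b' hb' hbb'
  have hb'₂ : b' ∉ closedNbr G g' := hN ▸ hb'
  simp only [Set.mem_compl_iff, mem_closedNbr, not_or] at hb hb'₂
  by_contra hnbb'
  exact hfar.not_ge <| edist_le_three_of_adj_of_adj_of_adj
    (modularProduct_adj_of_not_adj (Ne.symm hb.1) hh hb.2 hn)
    (modularProduct_adj_of_not_adj hbb' hh.symm hnbb' (fun e => hn e.symm))
    (modularProduct_adj_of_not_adj hb'₂.1 hh (fun e => hb'₂.2 e.symm) hn)

lemma not_adj_of_mem_closedNbr_left_of_three_lt_edist (hg : g = g' ∨ G.Adj g g')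
    (hh : h ≠ h') (hn : ¬H.Adj h h') (hfar : 3 < (modularProduct G H).edist (g, h) (g', h'))
    {a b : α} (ha : a ∈ closedNbr G g) (hb : b ∉ closedNbr G g) : ¬G.Adj a b := by
  have hb₂ : b ∉ closedNbr G g' := closedNbr_eq_of_three_lt_edist hg hh hn hfar ▸ hb
  rw [mem_closedNbr, not_or] at hb hb₂
  intro hab
  rcases mem_closedNbr.1 ha with rfl | hga
  · exact hb.2 hab
  exact hfar.not_ge <| edist_le_three_of_adj_of_adj_of_adj (modularProduct_adj_of_left hga)
    (modularProduct_adj_of_left hab)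
    (modularProduct_adj_of_not_adj hb₂.1 hh (fun e => hb₂.2 e.symm) hn)

lemma mem_closedNbr_or_mem_closedNbr_of_three_lt_edist (hg : g = g' ∨ G.Adj g g')
    (hh : h ≠ h') (hn : ¬H.Adj h h') (hfar : 3 < (modularProduct G H).edist (g, h) (g', h'))
    {a₀ : α} (ha₀ : a₀ ∉ closedNbr G g) (t : β) : t ∈ closedNbr H h ∨ t ∈ closedNbr H h' := by
  have ha₀' : a₀ ∉ closedNbr G g' := closedNbr_eq_of_three_lt_edist hg hh hn hfar ▸ ha₀
  by_contra ht
  simp only [mem_closedNbr, not_or] at ha₀ ha₀' ht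
  exact hfar.not_ge <| (edist_le_two_of_adj_of_adj
    (modularProduct_adj_of_not_adj (Ne.symm ha₀.1) (Ne.symm ht.1.1) ha₀.2 ht.1.2)
    (modularProduct_adj_of_not_adj ha₀'.1 ht.2.1 (fun e => ha₀'.2 e.symm)
      (fun e => ht.2.2 e.symm))).trans (by norm_num)

lemma isClique_closedNbr_right_of_three_lt_edist (hg : g = g' ∨ G.Adj g g') (hh : h ≠ h')
    (hn : ¬H.Adj h h') (hfar : 3 < (modularProduct G H).edist (g, h) (g', h'))
    {a₀ : α} (ha₀ : a₀ ∉ closedNbr G g) : H.IsClique (closedNbr H h) := by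
  have ha₀' : a₀ ∉ closedNbr G g' := closedNbr_eq_of_three_lt_edist hg hh hn hfar ▸ ha₀
  rw [mem_closedNbr, not_or] at ha₀ ha₀'
  intro t ht u hu htu
  rcases mem_closedNbr.1 ht with rfl | hht
  · exact (mem_closedNbr.1 hu).resolve_left (Ne.symm htu)
  rcases mem_closedNbr.1 hu with rfl | hhu
  · exact hht.symm
  by_contra hntu
  exact hfar.not_ge <| edist_le_three_of_adj_of_adj_of_adj
    (modularProduct_adj_of_eq_or_adj (.inl rfl) hht)
    (modularProduct_adj_of_not_adj (Ne.symm ha₀.1) htu ha₀.2 hntu)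
    (modularProduct_adj_of_not_adj ha₀'.1 (fun e => hn (e ▸ hhu)) (fun e => ha₀'.2 e.symm)
      (fun e => not_adj_of_adj_of_three_lt_edist hg hfar hhu e.symm))

lemma not_adj_of_mem_closedNbr_right_of_three_lt_edist (hg : g = g' ∨ G.Adj g g')
    (hn : ¬H.Adj h h') (hfar : 3 < (modularProduct G H).edist (g, h) (g', h'))
    {t u : β} (ht : t ∈ closedNbr H h) (hu : u ∈ closedNbr H h') : ¬H.Adj t u := by
  intro htu
  rcases mem_closedNbr.1 ht with rfl | hht <;> rcases mem_closedNbr.1 hu with rfl | hh'u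
  · exact hn htu
  · exact not_adj_of_adj_of_three_lt_edist hg hfar htu hh'u
  · exact not_adj_of_adj_of_three_lt_edist hg hfar hht htu.symm
  · exact hfar.not_ge <| edist_le_three_of_adj_of_adj_of_adj
      (modularProduct_adj_of_eq_or_adj (.inl rfl) hht) (modularProduct_adj_of_eq_or_adj hg htu)
      (modularProduct_adj_of_eq_or_adj (.inl rfl) hh'u.symm)

lemma not_reachable_and_twoCliques_of_three_lt_edist (hG : ¬IsCompleteGraph G)
    (hg : g = g' ∨ G.Adj g g') (hh : h ≠ h') (hn : ¬H.Adj h h')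
    (hfar : 3 < (modularProduct G H).edist (g, h) (g', h')) :
    ¬(modularProduct G H).Reachable (g, h) (g', h') ∧ TwoCliques G ∧ TwoCliques H := by
  have hfar' : 3 < (modularProduct G H).edist (g', h') (g, h) := by rwa [edist_comm]
  have hN := closedNbr_eq_of_three_lt_edist hg hh hn hfar
  obtain ⟨a₀, ha₀⟩ := exists_not_mem_closedNbr_of_three_lt_edist hG hg hh hn hfar
  have hGsplit : ∀ a b, a ≠ b → (G.Adj a b ↔ (a ∈ closedNbr G g ↔ b ∈ closedNbr G g)) :=
    fun _ _ => adj_iff_mem_iff_mem_of_isClique (fun v => em _)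
      (isClique_closedNbr_left_of_three_lt_edist hg hh hn hfar)
      (isClique_compl_closedNbr_left_of_three_lt_edist hg hh hn hfar)
      (fun _ ha _ hb => not_adj_of_mem_closedNbr_left_of_three_lt_edist hg hh hn hfar ha hb)
  have hHsplit : ∀ t u, t ≠ u → (H.Adj t u ↔ (t ∈ closedNbr H h ↔ u ∈ closedNbr H h)) :=
    fun _ _ => adj_iff_mem_iff_mem_of_isClique
      (mem_closedNbr_or_mem_closedNbr_of_three_lt_edist hg hh hn hfar ha₀)
      (isClique_closedNbr_right_of_three_lt_edist hg hh hn hfar ha₀)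
      (isClique_closedNbr_right_of_three_lt_edist (hg.imp Eq.symm Adj.symm) hh.symm
        (fun e => hn e.symm) hfar' (hN ▸ ha₀))
      (fun _ ht _ hu => not_adj_of_mem_closedNbr_right_of_three_lt_edist hg hn hfar ht hu)
  have hh' : h' ∉ closedNbr H h := by
    rw [mem_closedNbr, not_or]
    exact ⟨hh.symm, hn⟩
  refine ⟨fun hr => hh' ?_, twoCliques_of_adj_iff ⟨g, self_mem_closedNbr G g⟩ ⟨a₀, ha₀⟩ hGsplit,
    twoCliques_of_adj_iff ⟨h, self_mem_closedNbr H h⟩ ⟨h', hh'⟩ hHsplit⟩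
  have hside := modularProduct_mem_iff_mem_iff_of_reachable hGsplit hHsplit hr
  exact (hside.1 (iff_of_true (self_mem_closedNbr G g) (self_mem_closedNbr H h))).1
    (mem_closedNbr.2 (hg.imp Eq.symm id))

end ThreeLtEdist

end

/-- if neither factor is complete, any two vertices of the modular
product are at distance at most three, or they are not joined by a path and both
factors are disjoint unions of two cliques. -/
theorem modularProduct_dist_le_three {α β : Type*} (G : SimpleGraph α) (H : SimpleGraph β)
    (hG : ¬ IsCompleteGraph G) (hH : ¬ IsCompleteGraph H) (x y : α × β) :
    (modularProduct G H).edist x y ≤ 3 ∨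
      (¬ (modularProduct G H).Reachable x y ∧ TwoCliques G ∧ TwoCliques H) := by
  rcases le_or_gt ((modularProduct G H).edist x y) 3 with hle | hfar
  · exact .inl hle
  right
  obtain ⟨hxy, hnadj, -⟩ := two_lt_edist_iff.1 ((by norm_num : (2 : ℕ∞) < 3).trans hfar)
  obtain ⟨g, h⟩ := x
  obtain ⟨g', h'⟩ := y
  rcases (modularProduct_not_adj_iff hxy).1 hnadj with ⟨hg, hh, hn⟩ | ⟨hh, hg, hn⟩
  · exact not_reachable_and_twoCliques_of_three_lt_edist hG hg hh hn hfar
  · have hfar' : 3 < (modularProduct H G).edist (h, g) (h', g') :=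
      hfar.trans_le ((modularProductComm H G).toHom.edist_le (h, g) (h', g'))
    obtain ⟨hnr, hH', hG'⟩ := not_reachable_and_twoCliques_of_three_lt_edist hH hh hg hn hfar'
    exact ⟨fun hr => hnr ((modularProductComm G H).reachable_iff.2 hr), hG', hH'⟩
end

section
/- For integers s, t ≥ 7, the strong metric dimension of the modular product of the cycles C_s and C_t satisfies dim_s(C_s ⋄ C_t) = st − 4·min{⌊s/3⌋, ⌊t/3⌋} − r, where r = 0 if min{s,t} ≡ 0 or 1 (mod 3); r = 1 if s = t and min{s,t} ≡ 2 (mod 3); and r = 2 if s ≠ t and min{s,t} ≡ 2 (mod 3). -/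
open SimpleGraph

/-!
Any two vertices of `C_s ⋄ C_t` (`s, t ≥ 7`) have a common neighbour, and adjacent vertices have
different closed neighbourhoods. In such a graph a set is strongly resolving exactly when its
complement is a clique, so `dim_s = st - ω`.

Call two vertices of a cycle close if they are equal or adjacent; then `(g, h) ∈ N[(g', h')]`
iff `g, g'` are close exactly when `h, h'` are. In a clique every row holds at most two vertices,
and next to a full row, on either side, one of the two following rows is empty. With `Z`, `O`, `D`
the numbers of rows holding `0, 1, 2` vertices, this gives `D ≤ 2Z`, strictly when `3 ∤ s`
(equality would make the set of empty rows invariant under `+3`). As a clique has `O + 2D`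
vertices and `Z + O + D = s`, this bounds it by `4⌊s/3⌋`, plus `2` when `s ≡ 2 (mod 3)`; by
symmetry we may take `s ≤ t`. For `s = t ≡ 2` equality forces an isolated full row
`{(g, h), (g, h + 1)}` and no row or column with a single vertex, but then column `h` holds only
`(g, h)`. The `2 × 2` blocks `{3q, 3q + 1}²` and at most two vertices in row `3⌊s/3⌋` attain the
bound.
-/

open Finset

section ClosedNbr

variable {V : Type*} {X : SimpleGraph V} {u v w : V}

theorem mem_closedNbr_iff : u ∈ closedNbr X v ↔ u = v ∨ X.Adj u v := by
  rw [closedNbr, Set.mem_insert_iff, mem_neighborSet, X.adj_comm]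

theorem mem_closedNbr_comm : u ∈ closedNbr X v ↔ v ∈ closedNbr X u := by
  rw [mem_closedNbr_iff, mem_closedNbr_iff, eq_comm, X.adj_comm]

theorem self_mem_closedNbr_s13 (v : V) : v ∈ closedNbr X v := Set.mem_insert v _

theorem SimpleGraph.IsClique.mem_closedNbr {s : Set V} (hs : X.IsClique s) (hu : u ∈ s)
    (hv : v ∈ s) : u ∈ closedNbr X v :=
  mem_closedNbr_iff.2 (or_iff_not_imp_left.2 (hs hu hv))

end ClosedNbr

section StrongResolving

variable {V : Type*} {X : SimpleGraph V} {u v w : V}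

theorem dist_le_two_of_forall_exists_adj (hcommon : ∀ u v, ∃ w, X.Adj u w ∧ X.Adj v w)
    (u v : V) : X.dist u v ≤ 2 := by
  obtain ⟨w, huw, hvw⟩ := hcommon u v
  exact dist_le (.cons huw (.cons hvw.symm .nil))

theorem eq_of_dist_eq_zero_of_forall_exists_adj (hcommon : ∀ u v, ∃ w, X.Adj u w ∧ X.Adj v w)
    (h : X.dist u v = 0) : u = v := by
  obtain ⟨w, huw, hvw⟩ := hcommon u v
  exact (huw.reachable.trans hvw.reachable.symm).dist_eq_zero_iff.1 h

theorem dist_eq_two_of_forall_exists_adj (hcommon : ∀ u v, ∃ w, X.Adj u w ∧ X.Adj v w)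
    (hne : u ≠ v) (hnadj : ¬ X.Adj u v) : X.dist u v = 2 := by
  have h0 : X.dist u v ≠ 0 := fun h => hne (eq_of_dist_eq_zero_of_forall_exists_adj hcommon h)
  have h1 : X.dist u v ≠ 1 := fun h => hnadj (dist_eq_one_iff_adj.1 h)
  have := dist_le_two_of_forall_exists_adj hcommon u v
  omega

theorem dist_eq_dist_add_dist_of_mem_closedNbr (hcommon : ∀ u v, ∃ w, X.Adj u w ∧ X.Adj v w)
    (huv : X.Adj u v) (hwu : w ∈ closedNbr X u) (hwv : w ∉ closedNbr X v) :
    X.dist v w = X.dist v u + X.dist u w := by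
  have huw : X.Adj u w := by
    rcases mem_closedNbr_iff.1 hwu with rfl | h
    · exact absurd (mem_closedNbr_iff.2 (Or.inr huv)) hwv
    · exact h.symm
  have hvw : v ≠ w := fun h => hwv (h ▸ self_mem_closedNbr_s13 v)
  have hnadj : ¬ X.Adj v w := fun h => hwv (mem_closedNbr_iff.2 (Or.inr h.symm))
  rw [dist_eq_two_of_forall_exists_adj hcommon hvw hnadj, dist_eq_one_iff_adj.2 huv.symm,
    dist_eq_one_iff_adj.2 huw]

theorem eq_of_dist_eq_dist_add_dist (hcommon : ∀ u v, ∃ w, X.Adj u w ∧ X.Adj v w)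
    (hne : u ≠ v) (hnadj : ¬ X.Adj u v) (h : X.dist u w = X.dist u v + X.dist v w) : v = w := by
  have := dist_le_two_of_forall_exists_adj hcommon u w
  rw [dist_eq_two_of_forall_exists_adj hcommon hne hnadj] at h
  exact eq_of_dist_eq_zero_of_forall_exists_adj hcommon (by omega)

theorem isStrongResolvingSet_iff_isClique_compl
    (hcommon : ∀ u v, ∃ w, X.Adj u w ∧ X.Adj v w)
    (htwin : ∀ u v, X.Adj u v → closedNbr X u ≠ closedNbr X v) (S : Set V) :
    IsStrongResolvingSet X S ↔ X.IsClique Sᶜ := by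
  constructor
  · intro hS u hu v hv hne
    by_contra hnadj
    obtain ⟨w, hw, hd | hd⟩ := hS u v hne
    · exact hv (eq_of_dist_eq_dist_add_dist hcommon hne hnadj hd ▸ hw)
    · exact hu (eq_of_dist_eq_dist_add_dist hcommon hne.symm (mt X.adj_symm hnadj) hd ▸ hw)
  · intro hS u v hne
    by_cases hv : v ∈ S
    · exact ⟨v, hv, .inl (by simp)⟩
    by_cases hu : u ∈ S
    · exact ⟨u, hu, .inr (by simp)⟩
    have huv : X.Adj u v := hS hu hv hne
    have mem_S {x y : V} (hy : y ∉ S) (hxy : x ∉ closedNbr X y) : x ∈ S :=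
      by_contra fun hx => hxy (hS.mem_closedNbr hx hy)
    obtain ⟨w, hw⟩ := not_forall.1 (mt Set.ext (htwin u v huv))
    by_cases hwu : w ∈ closedNbr X u
    · have hwv : w ∉ closedNbr X v := fun h => hw (iff_of_true hwu h)
      exact ⟨w, mem_S hv hwv, .inr (dist_eq_dist_add_dist_of_mem_closedNbr hcommon huv hwu hwv)⟩
    · have hwv : w ∈ closedNbr X v := by_contra fun h => hw (iff_of_false hwu h)
      exact ⟨w, mem_S hu hwu,
        .inl (dist_eq_dist_add_dist_of_mem_closedNbr hcommon huv.symm hwv hwu)⟩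

theorem sdim_eq_card_sub_cliqueNum [Finite V]
    (hcommon : ∀ u v, ∃ w, X.Adj u w ∧ X.Adj v w)
    (htwin : ∀ u v, X.Adj u v → closedNbr X u ≠ closedNbr X v) :
    sdim X = Nat.card V - X.cliqueNum := by
  have hres := isStrongResolvingSet_iff_isClique_compl hcommon htwin
  have hcompl (S : Set V) : S.ncard = Nat.card V - Sᶜ.ncard := by
    have := Set.ncard_add_ncard_compl S
    omega
  apply le_antisymm
  · obtain ⟨K, hK⟩ := X.exists_isNClique_cliqueNum
    refine Nat.sInf_le ⟨(K : Set V)ᶜ, ?_, (hres _).2 (by simpa using hK.isClique)⟩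
    rw [hcompl, compl_compl, Set.ncard_coe_finset, hK.card_eq]
  · refine le_csInf ⟨_, Set.univ, rfl, (hres _).2 (by simp)⟩ ?_
    rintro _ ⟨S, rfl, hS⟩
    have hfin := Set.toFinite Sᶜ
    have hclique : X.IsClique (hfin.toFinset : Set V) := by simpa using (hres S).1 hS
    rw [hcompl S, Set.ncard_eq_toFinset_card _ hfin]
    exact Nat.sub_le_sub_left hclique.card_le_cliqueNum _

end StrongResolving

section ModularProduct

variable {α β : Type*} {G : SimpleGraph α} {H : SimpleGraph β}

theorem modularProduct_adj_iff {u v : α × β} :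
    (modularProduct G H).Adj u v ↔
      u ≠ v ∧ (u.1 ∈ closedNbr G v.1 ↔ u.2 ∈ closedNbr H v.2) := by
  obtain ⟨a, b⟩ := u
  obtain ⟨c, d⟩ := v
  simp only [modularProduct, fromRel_adj, mem_closedNbr_iff, ne_eq, Prod.mk.injEq,
    G.adj_comm c a, H.adj_comm d b, eq_comm (a := c), eq_comm (a := d), or_self]
  refine and_congr_right fun hne => ?_
  by_cases hac : a = c <;> by_cases hbd : b = d <;> by_cases hG : G.Adj a c <;>
    by_cases hH : H.Adj b d <;> simp_all

theorem mem_closedNbr_modularProduct {u w : α × β} :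
    w ∈ closedNbr (modularProduct G H) u ↔
      (w.1 ∈ closedNbr G u.1 ↔ w.2 ∈ closedNbr H u.2) := by
  rw [mem_closedNbr_iff, modularProduct_adj_iff]
  constructor
  · rintro (rfl | ⟨-, h⟩)
    · exact iff_of_true (self_mem_closedNbr_s13 _) (self_mem_closedNbr_s13 _)
    · exact h
  · intro h
    by_cases hwu : w = u
    · exact .inl hwu
    · exact .inr ⟨hwu, h⟩

theorem modularProduct_exists_common_adj
    (hGcover : ∀ a b : α, ∃ x, x ∉ closedNbr G a ∧ x ∉ closedNbr G b)
    (hHcover : ∀ a b : β, ∃ y, y ∉ closedNbr H a ∧ y ∉ closedNbr H b) (u v : α × β) :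
    ∃ w, (modularProduct G H).Adj u w ∧ (modularProduct G H).Adj v w := by
  obtain ⟨x, hxu, hxv⟩ := hGcover u.1 v.1
  obtain ⟨y, hyu, hyv⟩ := hHcover u.2 v.2
  refine ⟨(x, y), ?_, ?_⟩ <;> rw [modularProduct_adj_iff, mem_closedNbr_comm (v := x),
    mem_closedNbr_comm (v := y)]
  · exact ⟨fun h => hxu (h ▸ self_mem_closedNbr_s13 _), iff_of_false hxu hyu⟩
  · exact ⟨fun h => hxv (h ▸ self_mem_closedNbr_s13 _), iff_of_false hxv hyv⟩

theorem modularProduct_closedNbr_ne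
    (hGcover : ∀ a b : α, ∃ x, x ∉ closedNbr G a ∧ x ∉ closedNbr G b)
    (hHcover : ∀ a b : β, ∃ y, y ∉ closedNbr H a ∧ y ∉ closedNbr H b)
    (hGtwin : ∀ a b, G.Adj a b → closedNbr G a ≠ closedNbr G b)
    (hHtwin : ∀ a b, H.Adj a b → closedNbr H a ≠ closedNbr H b) {u v : α × β}
    (huv : (modularProduct G H).Adj u v) :
    closedNbr (modularProduct G H) u ≠ closedNbr (modularProduct G H) v := by
  obtain ⟨hne, hiff⟩ := modularProduct_adj_iff.1 huv
  suffices ∃ w : α × β, ¬((w.1 ∈ closedNbr G u.1 ↔ w.2 ∈ closedNbr H u.2) ↔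
      (w.1 ∈ closedNbr G v.1 ↔ w.2 ∈ closedNbr H v.2)) by
    obtain ⟨w, hw⟩ := this
    intro heq
    rw [← mem_closedNbr_modularProduct, ← mem_closedNbr_modularProduct, heq] at hw
    exact hw Iff.rfl
  by_cases h1 : u.1 ∈ closedNbr G v.1
  · have h2 := hiff.1 h1
    by_cases heq : u.1 = v.1
    · have hadj : H.Adj u.2 v.2 := (mem_closedNbr_iff.1 h2).resolve_left
        fun h => hne (Prod.ext heq h)
      obtain ⟨y, hy⟩ := not_forall.1 (mt Set.ext (hHtwin _ _ hadj))
      obtain ⟨x, hxu, hxv⟩ := hGcover u.1 v.1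
      exact ⟨(x, y), by tauto⟩
    · have hadj : G.Adj u.1 v.1 := (mem_closedNbr_iff.1 h1).resolve_left heq
      obtain ⟨x, hx⟩ := not_forall.1 (mt Set.ext (hGtwin _ _ hadj))
      obtain ⟨y, hyu, hyv⟩ := hHcover u.2 v.2
      exact ⟨(x, y), by tauto⟩
  · obtain ⟨y, hyu, hyv⟩ := hHcover u.2 v.2
    refine ⟨(v.1, y), fun h => ?_⟩
    rw [mem_closedNbr_comm] at h1
    exact hyv ((h.1 (iff_of_false h1 hyu)).1 (self_mem_closedNbr_s13 _))

theorem modularProduct_adj_swap {u v : α × β} :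
    (modularProduct H G).Adj u.swap v.swap ↔ (modularProduct G H).Adj u v := by
  rw [modularProduct_adj_iff, modularProduct_adj_iff, ne_eq, Prod.swap_inj,
    iff_comm (a := _ ∈ _)]
  rfl

theorem SimpleGraph.IsClique.image_swap {C : Set (α × β)}
    (hC : (modularProduct G H).IsClique C) :
    (modularProduct H G).IsClique (Prod.swap '' C) := by
  rintro _ ⟨u, hu, rfl⟩ _ ⟨v, hv, rfl⟩ hne
  exact modularProduct_adj_swap.2 (hC hu hv fun h => hne (h ▸ rfl))

theorem cliqueNum_modularProduct_le_swap [Finite α] [Finite β] :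
    (modularProduct G H).cliqueNum ≤ (modularProduct H G).cliqueNum := by
  classical
  obtain ⟨K, hK⟩ := (modularProduct G H).exists_isNClique_cliqueNum
  have hclique : (modularProduct H G).IsClique (K.image Prod.swap : Set (β × α)) := by
    simpa using hK.isClique.image_swap
  rw [← hK.card_eq, ← card_image_of_injective K Prod.swap_injective]
  exact hclique.card_le_cliqueNum

theorem cliqueNum_modularProduct_comm [Finite α] [Finite β] :
    (modularProduct G H).cliqueNum = (modularProduct H G).cliqueNum :=
  le_antisymm cliqueNum_modularProduct_le_swap cliqueNum_modularProduct_le_swap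

theorem SimpleGraph.IsClique.fst_mem_closedNbr_iff {C : Set (α × β)}
    (hC : (modularProduct G H).IsClique C) {p q : α × β} (hp : p ∈ C) (hq : q ∈ C) :
    p.1 ∈ closedNbr G q.1 ↔ p.2 ∈ closedNbr H q.2 :=
  mem_closedNbr_modularProduct.1 (hC.mem_closedNbr hp hq)

end ModularProduct


section Cycle

open Fin.CommRing

variable {n : ℕ} [NeZero n]

theorem closedNbr_cycleGraph (v : Fin n) : closedNbr (cycleGraph n) v = {v, v - 1, v + 1} := by
  rcases n with _ | _ | n
  · exact v.elim0
  · ext x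
    obtain rfl : x = v := Fin.ext (by omega)
    simp [self_mem_closedNbr_s13]
  · rw [closedNbr, cycleGraph_neighborSet]

theorem mem_closedNbr_cycleGraph {u v : Fin n} :
    u ∈ closedNbr (cycleGraph n) v ↔ u = v ∨ u = v - 1 ∨ u = v + 1 := by
  simp [closedNbr_cycleGraph]

theorem natCast_ne_zero_of_lt {k : ℕ} (hk : 0 < k) (hkn : k < n) : (k : Fin n) ≠ 0 := by
  rw [ne_eq, Fin.natCast_eq_zero]
  exact fun h => absurd (Nat.le_of_dvd hk h) (by omega)

theorem natCast_inj_of_lt {u v : ℕ} (hu : u < n) (hv : v < n) : (u : Fin n) = v ↔ u = v :=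
  (CharP.natCast_injOn_Iio (Fin n) n).eq_iff hu hv

theorem natCast_mem_closedNbr_cycleGraph_iff {x y : ℕ} (hx : x + 1 < n) (hy : y + 1 < n) :
    (x : Fin n) ∈ closedNbr (cycleGraph n) (y : Fin n) ↔ x ≤ y + 1 ∧ y ≤ x + 1 := by
  rw [mem_closedNbr_cycleGraph, eq_sub_iff_add_eq, ← Nat.cast_add_one, ← Nat.cast_add_one,
    natCast_inj_of_lt (by omega) (by omega), natCast_inj_of_lt (by omega) (by omega),
    natCast_inj_of_lt (by omega) (by omega)]
  omega

theorem add_two_notMem_closedNbr_cycleGraph (hn : 4 ≤ n) (v : Fin n) :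
    v + 2 ∉ closedNbr (cycleGraph n) v := by
  have h₁ : ((1 : ℕ) : Fin n) ≠ 0 := natCast_ne_zero_of_lt one_pos (by omega)
  have h₂ : ((2 : ℕ) : Fin n) ≠ 0 := natCast_ne_zero_of_lt two_pos (by omega)
  have h₃ : ((3 : ℕ) : Fin n) ≠ 0 := natCast_ne_zero_of_lt three_pos (by omega)
  push_cast at h₁ h₂ h₃
  rw [mem_closedNbr_cycleGraph]
  rintro (h | h | h)
  · exact h₂ (by linear_combination h)
  · exact h₃ (by linear_combination h)
  · exact h₁ (by linear_combination h)

theorem eq_or_eq_add_one_of_mem_closedNbr_cycleGraph (hn : 4 ≤ n) {h y : Fin n}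
    (hy : y ∈ closedNbr (cycleGraph n) h) (hy' : y ∈ closedNbr (cycleGraph n) (h + 1)) :
    y = h ∨ y = h + 1 := by
  rcases mem_closedNbr_cycleGraph.1 hy with hy | rfl | hy
  · exact .inl hy
  · rw [mem_closedNbr_comm, show h + 1 = h - 1 + 2 by ring] at hy'
    exact absurd hy' (add_two_notMem_closedNbr_cycleGraph hn _)
  · exact .inr hy

theorem eq_add_one_or_of_mem_closedNbr_cycleGraph {u v : Fin n} (hne : u ≠ v)
    (h : u ∈ closedNbr (cycleGraph n) v) : u = v + 1 ∨ v = u + 1 := by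
  rcases mem_closedNbr_cycleGraph.1 h with h | rfl | h
  · exact absurd h hne
  · exact .inr (by ring)
  · exact .inl h

theorem not_pairwise_mem_closedNbr_cycleGraph (hn : 4 ≤ n) {a b c : Fin n} (hab : a ≠ b)
    (hac : a ≠ c) (hbc : b ≠ c) (h₁ : b ∈ closedNbr (cycleGraph n) a)
    (h₂ : c ∈ closedNbr (cycleGraph n) a) (h₃ : c ∈ closedNbr (cycleGraph n) b) : False := by
  have two_apart (x : Fin n) : x + 2 ∉ closedNbr (cycleGraph n) x :=
    add_two_notMem_closedNbr_cycleGraph hn x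
  obtain rfl | rfl := (mem_closedNbr_cycleGraph.1 h₁).resolve_left hab.symm <;>
    obtain rfl | rfl := (mem_closedNbr_cycleGraph.1 h₂).resolve_left hac.symm
  · exact hbc rfl
  · exact two_apart (a - 1) (by rwa [show a - 1 + 2 = a + 1 by ring])
  · exact two_apart (a - 1) (by rwa [mem_closedNbr_comm, show a - 1 + 2 = a + 1 by ring])
  · exact hbc rfl

theorem closedNbr_cycleGraph_injective (hn : 4 ≤ n) :
    Function.Injective (closedNbr (cycleGraph n)) := by
  intro a b hab
  have two_apart (x : Fin n) : x + 2 ∉ closedNbr (cycleGraph n) x :=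
    add_two_notMem_closedNbr_cycleGraph hn x
  have hb : b ∈ closedNbr (cycleGraph n) a := hab ▸ self_mem_closedNbr_s13 b
  obtain rfl | rfl | rfl := mem_closedNbr_cycleGraph.1 hb
  · rfl
  · have : a + 1 ∈ closedNbr (cycleGraph n) (a - 1) :=
      hab ▸ mem_closedNbr_cycleGraph.2 (.inr (.inr rfl))
    exact absurd (by rwa [show a - 1 + 2 = a + 1 by ring]) (two_apart (a - 1))
  · have : a - 1 ∈ closedNbr (cycleGraph n) (a + 1) :=
      hab ▸ mem_closedNbr_cycleGraph.2 (.inr (.inl rfl))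
    rw [mem_closedNbr_comm] at this
    exact absurd (by rwa [show a - 1 + 2 = a + 1 by ring]) (two_apart (a - 1))

theorem exists_notMem_closedNbr_cycleGraph (hn : 7 ≤ n) (a b : Fin n) :
    ∃ x, x ∉ closedNbr (cycleGraph n) a ∧ x ∉ closedNbr (cycleGraph n) b := by
  classical
  let N : Finset (Fin n) := {a, a - 1, a + 1, b, b - 1, b + 1}
  have hcard : #N < #(univ : Finset (Fin n)) := by
    rw [card_univ, Fintype.card_fin]
    exact card_le_six.trans_lt (by omega)
  obtain ⟨x, -, hx⟩ := exists_mem_notMem_of_card_lt_card hcard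
  simp only [N, mem_insert, mem_singleton, not_or] at hx
  exact ⟨x, by rw [mem_closedNbr_cycleGraph]; tauto, by rw [mem_closedNbr_cycleGraph]; tauto⟩

end Cycle

section Profile

variable {n : ℕ} {f : Fin n → ℕ}

theorem card_zeros_add_card_ones_add_card_twos (hf : ∀ g, f g ≤ 2) :
    #{g | f g = 0} + #{g | f g = 1} + #{g | f g = 2} = n := by
  rw [card_filter, card_filter, card_filter, ← sum_add_distrib, ← sum_add_distrib]
  calc _ = ∑ _ : Fin n, 1 := sum_congr rfl fun g _ => by
          obtain h | h | h : f g = 0 ∨ f g = 1 ∨ f g = 2 := by have := hf g; omega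
          all_goals simp [h]
    _ = n := by simp

theorem sum_eq_card_ones_add_two_mul_card_twos (hf : ∀ g, f g ≤ 2) :
    ∑ g, f g = #{g | f g = 1} + 2 * #{g | f g = 2} := by
  rw [card_filter, card_filter, mul_sum, ← sum_add_distrib]
  refine sum_congr rfl fun g _ => ?_
  obtain h | h | h : f g = 0 ∨ f g = 1 ∨ f g = 2 := by have := hf g; omega
  all_goals simp [h]

theorem card_image_union_image_le {α : Type*} [DecidableEq α] (s : Finset α) (φ ψ : α → α) :
    #(s.image φ ∪ s.image ψ) ≤ 2 * #s :=
  (card_union_le _ _).trans (two_mul #s ▸ add_le_add card_image_le card_image_le)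

open Fin.CommRing

variable [NeZero n]

theorem eq_univ_of_forall_add_mem {k : ℕ} (hk : k.Coprime n) {Z : Finset (Fin n)}
    (hZ : Z.Nonempty) (hstep : ∀ z ∈ Z, z + k ∈ Z) : Z = univ := by
  obtain ⟨z, hz⟩ := hZ
  have hiter (m : ℕ) : z + ((k * m : ℕ) : Fin n) ∈ Z := by
    induction m with
    | zero => simpa using hz
    | succ m ih => simpa [mul_add, add_assoc] using hstep _ ih
  refine eq_univ_of_forall fun x => ?_
  obtain ⟨m, -, hm⟩ := Nat.exists_mul_mod_eq_of_coprime (x - z).val hk (NeZero.ne n)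
  have hx : ((k * m : ℕ) : Fin n) = x - z :=
    Fin.ext (by rw [Fin.val_natCast, hm, Nat.mod_eq_of_lt (x - z).isLt])
  simpa [hx] using hiter m

structure IsCliqueProfile (f : Fin n → ℕ) : Prop where
  le_two (g : Fin n) : f g ≤ 2
  next (g : Fin n) : f g = 2 → f (g + 1) = 0 ∨ f (g + 2) = 0
  prev (g : Fin n) : f (g + 2) = 2 → f (g + 1) = 0 ∨ f g = 0

namespace IsCliqueProfile

theorem twos_subset_sub (hf : IsCliqueProfile f) :
    ({g | f g = 2} : Finset (Fin n)) ⊆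
      ({g | f g = 0} : Finset _).image (· - 1) ∪ ({g | f g = 0} : Finset _).image (· - 2) := by
  intro g hg
  rw [mem_filter_univ] at hg
  rcases hf.next g hg with h | h
  · exact mem_union_left _ (mem_image.2 ⟨g + 1, (mem_filter_univ _).2 h, by ring⟩)
  · exact mem_union_right _ (mem_image.2 ⟨g + 2, (mem_filter_univ _).2 h, by ring⟩)

theorem twos_subset_add (hf : IsCliqueProfile f) :
    ({g | f g = 2} : Finset (Fin n)) ⊆
      ({g | f g = 0} : Finset _).image (· + 1) ∪ ({g | f g = 0} : Finset _).image (· + 2) := by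
  intro g hg
  rw [mem_filter_univ, ← sub_add_cancel g 2] at hg
  rcases hf.prev (g - 2) hg with h | h
  · exact mem_union_left _ (mem_image.2 ⟨g - 2 + 1, (mem_filter_univ _).2 h, by ring⟩)
  · exact mem_union_right _ (mem_image.2 ⟨g - 2, (mem_filter_univ _).2 h, by ring⟩)

theorem card_twos_le (hf : IsCliqueProfile f) : #{g | f g = 2} ≤ 2 * #{g | f g = 0} :=
  (card_le_card hf.twos_subset_sub).trans (card_image_union_image_le _ _ _)

/-- Equality in `card_twos_le` forces `D = (Z - 1) ∪ (Z - 2) = (Z + 1) ∪ (Z + 2)` for the sets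
`Z` and `D` of empty and full rows, so that `Z + 3 ⊆ Z`. -/
theorem card_twos_lt (hf : IsCliqueProfile f) (h3 : ¬ 3 ∣ n)
    (hZ : ({g | f g = 0} : Finset (Fin n)).Nonempty) : #{g | f g = 2} < 2 * #{g | f g = 0} := by
  set Z : Finset (Fin n) := {g | f g = 0}
  set D : Finset (Fin n) := {g | f g = 2}
  by_contra! hle
  have hD₁ : D = Z.image (· - 1) ∪ Z.image (· - 2) :=
    eq_of_subset_of_card_le hf.twos_subset_sub ((card_image_union_image_le _ _ _).trans hle)
  have hD₂ : D = Z.image (· + 1) ∪ Z.image (· + 2) :=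
    eq_of_subset_of_card_le hf.twos_subset_add ((card_image_union_image_le _ _ _).trans hle)
  have hstep : ∀ z ∈ Z, z + (3 : ℕ) ∈ Z := by
    intro z hz
    have h1 : z + 1 ∈ D := hD₂ ▸ mem_union_left _ (mem_image_of_mem _ hz)
    have h2 : z + 2 ∈ D := hD₂ ▸ mem_union_right _ (mem_image_of_mem _ hz)
    rw [hD₁, mem_union, mem_image, mem_image] at h1
    rcases h1 with ⟨x, hx, hxz⟩ | ⟨x, hx, hxz⟩
    · obtain rfl : x = z + 2 := by linear_combination hxz
      simp only [Z, D, mem_filter_univ] at hx h2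
      omega
    · obtain rfl : x = z + 3 := by linear_combination hxz
      simpa using hx
  have hZ_univ : Z = univ :=
    eq_univ_of_forall_add_mem ((Nat.Prime.coprime_iff_not_dvd Nat.prime_three).2 h3) hZ hstep
  have hD : D = ∅ := eq_empty_of_forall_notMem fun g hg => by
    have hg0 : g ∈ Z := hZ_univ ▸ mem_univ g
    simp only [Z, D, mem_filter_univ] at hg hg0
    omega
  rw [hD, card_empty] at hle
  exact hZ.card_pos.ne' (by omega)

theorem sum_le (hf : IsCliqueProfile f) (hn : 2 ≤ n) :
    ∑ g, f g ≤ 4 * (n / 3) + if n % 3 = 2 then 2 else 0 := by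
  have hcard := card_zeros_add_card_ones_add_card_twos hf.le_two
  have hle := hf.card_twos_le
  rw [sum_eq_card_ones_add_two_mul_card_twos hf.le_two]
  by_cases h3 : 3 ∣ n
  · split_ifs <;> omega
  obtain hZ | hZ := ({g | f g = 0} : Finset (Fin n)).eq_empty_or_nonempty
  · rw [hZ, card_empty] at hcard hle
    split_ifs <;> omega
  · have := hf.card_twos_lt h3 hZ
    split_ifs <;> omega

theorem even_card_twos (hf : IsCliqueProfile f)
    (hpair : ∀ g, f g = 2 → f (g - 1) = 2 ∨ f (g + 1) = 2) : Even #{g | f g = 2} := by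
  set P : Finset (Fin n) := {g | f g = 2 ∧ f (g + 1) = 2}
  have hD : ({g | f g = 2} : Finset (Fin n)) = P ∪ P.image (· + 1) := by
    ext g
    simp only [P, mem_union, mem_image, mem_filter_univ]
    constructor
    · intro hg
      rcases hpair g hg with h | h
      · exact .inr ⟨g - 1, ⟨h, by rwa [sub_add_cancel]⟩, sub_add_cancel g 1⟩
      · exact .inl ⟨hg, h⟩
    · rintro (⟨hg, -⟩ | ⟨p, ⟨-, hp⟩, rfl⟩)
      exacts [hg, hp]
  have hdisj : Disjoint P (P.image (· + 1)) := by
    rw [Finset.disjoint_left]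
    intro g hg hg'
    obtain ⟨p, hp, rfl⟩ := mem_image.1 hg'
    simp only [P, mem_filter_univ] at hp hg
    rw [show p + 1 + 1 = p + 2 by ring] at hg
    have := hf.next p hp.1
    omega
  rw [hD, card_union_of_disjoint hdisj, card_image_of_injective _ (add_left_injective 1)]
  exact ⟨_, rfl⟩

/-- Equality forces `n / 3 + 1` empty rows, `2 (n / 3) + 1` full rows and no others; an odd number
of full rows cannot all be paired off as in `even_card_twos`. -/
theorem exists_isolated_two (hf : IsCliqueProfile f) (hn : 5 ≤ n) (h2 : n % 3 = 2)
    (hsum : ∑ g, f g = 4 * (n / 3) + 2) :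
    (∀ g, f g ≠ 1) ∧ ∃ g, f g = 2 ∧ f (g - 1) = 0 ∧ f (g + 1) = 0 := by
  have hcard := card_zeros_add_card_ones_add_card_twos hf.le_two
  have hle := hf.card_twos_le
  rw [sum_eq_card_ones_add_two_mul_card_twos hf.le_two] at hsum
  obtain hZ | hZ := ({g | f g = 0} : Finset (Fin n)).eq_empty_or_nonempty
  · rw [hZ, card_empty] at hcard hle
    omega
  have hlt := hf.card_twos_lt (by omega) hZ
  have h1 : ∀ g, f g ≠ 1 := fun g hg => by
    have : g ∈ ({g | f g = 1} : Finset (Fin n)) := (mem_filter_univ _).2 hg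
    have := card_pos.2 ⟨g, this⟩
    omega
  refine ⟨h1, ?_⟩
  by_contra! hiso
  obtain ⟨k, hk⟩ := hf.even_card_twos fun g hg => by
    have := hiso g hg
    have := h1 (g - 1); have := h1 (g + 1)
    have := hf.le_two (g - 1); have := hf.le_two (g + 1)
    omega
  omega

end IsCliqueProfile

end Profile

section RowCount

variable {α β : Type*} [DecidableEq α]

def rowCount (C : Finset (α × β)) (g : α) : ℕ := #{p ∈ C | p.1 = g}

theorem sum_rowCount [Fintype α] (C : Finset (α × β)) : ∑ g, rowCount C g = #C :=
  (card_eq_sum_card_fiberwise fun p _ => mem_univ p.1).symm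

theorem rowCount_ne_zero {C : Finset (α × β)} {g : α} {h : β} (hgh : (g, h) ∈ C) :
    rowCount C g ≠ 0 :=
  card_ne_zero.2 ⟨(g, h), mem_filter.2 ⟨hgh, rfl⟩⟩

end RowCount

section CliqueRows

open Fin.CommRing

variable {a b : ℕ} [NeZero b] {C : Finset (Fin a × Fin b)}

theorem rowCount_le_two (hb : 4 ≤ b)
    (hC : (modularProduct (cycleGraph a) (cycleGraph b)).IsClique (C : Set (Fin a × Fin b)))
    (g : Fin a) : rowCount C g ≤ 2 := by
  by_contra! hlt
  obtain ⟨p, q, r, hp, hq, hr, hpq, hpr, hqr⟩ := two_lt_card_iff.1 hlt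
  simp only [mem_filter] at hp hq hr
  have close {x y : Fin a × Fin b} (hx : x ∈ C ∧ x.1 = g) (hy : y ∈ C ∧ y.1 = g) :
      y.2 ∈ closedNbr (cycleGraph b) x.2 :=
    (hC.fst_mem_closedNbr_iff hy.1 hx.1).1 (hy.2.trans hx.2.symm ▸ self_mem_closedNbr_s13 _)
  have snd_ne {x y : Fin a × Fin b} (hx : x.1 = g) (hy : y.1 = g) (hxy : x ≠ y) : x.2 ≠ y.2 :=
    fun h => hxy (Prod.ext (hx.trans hy.symm) h)
  exact not_pairwise_mem_closedNbr_cycleGraph hb (snd_ne hp.2 hq.2 hpq) (snd_ne hp.2 hr.2 hpr)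
    (snd_ne hq.2 hr.2 hqr) (close hp hq) (close hp hr) (close hq hr)

theorem exists_pair_of_rowCount_eq_two
    (hC : (modularProduct (cycleGraph a) (cycleGraph b)).IsClique (C : Set (Fin a × Fin b)))
    {g : Fin a} (h2 : rowCount C g = 2) : ∃ h, (g, h) ∈ C ∧ (g, h + 1) ∈ C := by
  obtain ⟨⟨g₁, y⟩, ⟨g₂, z⟩, hne, hyz⟩ := card_eq_two.1 h2
  obtain ⟨hy, rfl⟩ := mem_filter.1 (hyz ▸ mem_insert_self _ _)
  obtain ⟨hz, rfl⟩ := mem_filter.1 (hyz ▸ mem_insert_of_mem (mem_singleton_self _))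
  have hclose : y ∈ closedNbr (cycleGraph b) z :=
    (hC.fst_mem_closedNbr_iff hy hz).1 (self_mem_closedNbr_s13 _)
  rcases eq_add_one_or_of_mem_closedNbr_cycleGraph (fun h => hne (Prod.ext rfl h)) hclose with h | h
  · exact ⟨z, hz, h ▸ hy⟩
  · exact ⟨y, hy, h ▸ hz⟩

/-- The vertices of row `x₁` lie in the two columns of the full row `x₀`, so the column of a
vertex of row `x₂` would be close to one of them. -/
theorem rowCount_eq_zero_or (hb : 4 ≤ b)
    (hC : (modularProduct (cycleGraph a) (cycleGraph b)).IsClique (C : Set (Fin a × Fin b)))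
    {x₀ x₁ x₂ : Fin a} (h₀₁ : x₁ ∈ closedNbr (cycleGraph a) x₀)
    (h₁₂ : x₂ ∈ closedNbr (cycleGraph a) x₁) (h₀₂ : x₂ ∉ closedNbr (cycleGraph a) x₀)
    (h2 : rowCount C x₀ = 2) : rowCount C x₁ = 0 ∨ rowCount C x₂ = 0 := by
  by_contra! hne
  obtain ⟨h, hh, hh'⟩ := exists_pair_of_rowCount_eq_two hC h2
  obtain ⟨⟨_, y⟩, hy'⟩ := card_ne_zero.1 hne.1
  obtain ⟨hy, rfl⟩ := mem_filter.1 hy'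
  obtain ⟨⟨_, z⟩, hz'⟩ := card_ne_zero.1 hne.2
  obtain ⟨hz, rfl⟩ := mem_filter.1 hz'
  have hyz : z ∈ closedNbr (cycleGraph b) y := (hC.fst_mem_closedNbr_iff hz hy).1 h₁₂
  apply h₀₂
  rcases eq_or_eq_add_one_of_mem_closedNbr_cycleGraph hb
      ((hC.fst_mem_closedNbr_iff hy hh).1 h₀₁) ((hC.fst_mem_closedNbr_iff hy hh').1 h₀₁)
    with rfl | rfl
  · exact (hC.fst_mem_closedNbr_iff hz hh).2 hyz
  · exact (hC.fst_mem_closedNbr_iff hz hh').2 hyz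

end CliqueRows

section CliqueBound

open Fin.CommRing

variable {a b : ℕ} [NeZero a] [NeZero b] {C : Finset (Fin a × Fin b)}

theorem isCliqueProfile_rowCount (ha : 4 ≤ a) (hb : 4 ≤ b)
    (hC : (modularProduct (cycleGraph a) (cycleGraph b)).IsClique (C : Set (Fin a × Fin b))) :
    IsCliqueProfile (rowCount C) where
  le_two := rowCount_le_two hb hC
  next g := rowCount_eq_zero_or hb hC (mem_closedNbr_cycleGraph.2 (.inr (.inr rfl)))
    (mem_closedNbr_cycleGraph.2 (.inr (.inr (by ring))))
    (add_two_notMem_closedNbr_cycleGraph ha g)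
  prev g := rowCount_eq_zero_or hb hC (mem_closedNbr_cycleGraph.2 (.inr (.inl (by ring))))
    (mem_closedNbr_cycleGraph.2 (.inr (.inl (by ring))))
    (mem_closedNbr_comm.not.1 (add_two_notMem_closedNbr_cycleGraph ha g))

theorem card_le_of_isClique_modularProduct (ha : 4 ≤ a) (hb : 4 ≤ b)
    (hC : (modularProduct (cycleGraph a) (cycleGraph b)).IsClique (C : Set (Fin a × Fin b))) :
    #C ≤ 4 * (a / 3) + if a % 3 = 2 then 2 else 0 :=
  sum_rowCount C ▸ (isCliqueProfile_rowCount ha hb hC).sum_le (by omega)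

/-- At equality in `card_le_of_isClique_modularProduct`, an isolated full row
`{(g, h), (g, h + 1)}` leaves column `h` with a single vertex, which `exists_isolated_two` for the
transposed clique forbids. -/
theorem card_le_of_isClique_modularProduct_self (ha : 5 ≤ a) (h2 : a % 3 = 2)
    {C : Finset (Fin a × Fin a)}
    (hC : (modularProduct (cycleGraph a) (cycleGraph a)).IsClique (C : Set (Fin a × Fin a))) :
    #C ≤ 4 * (a / 3) + 1 := by
  classical
  have hle := card_le_of_isClique_modularProduct (by omega) (by omega) hC
  rw [if_pos h2] at hle
  by_contra! hgt
  set C' := C.image Prod.swap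
  have hC' : (modularProduct (cycleGraph a) (cycleGraph a)).IsClique (C' : Set _) := by
    simpa [C'] using hC.image_swap
  have hsum : ∑ g, rowCount C g = 4 * (a / 3) + 2 := by
    rw [sum_rowCount]
    omega
  have hsum' : ∑ g, rowCount C' g = 4 * (a / 3) + 2 := by
    rw [sum_rowCount, card_image_of_injective _ Prod.swap_injective]
    omega
  obtain ⟨-, g, hg, hg_sub, hg_add⟩ :=
    (isCliqueProfile_rowCount (by omega) (by omega) hC).exists_isolated_two ha h2 hsum
  obtain ⟨hnot_one, -⟩ :=
    (isCliqueProfile_rowCount (by omega) (by omega) hC').exists_isolated_two ha h2 hsum'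
  obtain ⟨h, hgh, -⟩ := exists_pair_of_rowCount_eq_two hC hg
  have hhg : (h, g) ∈ C' := mem_image_of_mem Prod.swap hgh
  have hcol : 1 < rowCount C' h := by
    have := rowCount_ne_zero hhg
    have := hnot_one h
    omega
  obtain ⟨⟨y, x⟩, hx, hxg⟩ := exists_mem_ne hcol (h, g)
  obtain ⟨hx, hy : y = h⟩ := mem_filter.1 hx
  rw [hy] at hx hxg
  have hxh : (x, h) ∈ C := by simpa [C'] using hx
  have hclose : x ∈ closedNbr (cycleGraph a) g :=
    (hC.fst_mem_closedNbr_iff hxh hgh).2 (self_mem_closedNbr_s13 _)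
  rcases mem_closedNbr_cycleGraph.1 hclose with rfl | rfl | rfl
  · exact hxg rfl
  · exact rowCount_ne_zero hxh hg_sub
  · exact rowCount_ne_zero hxh hg_add

end CliqueBound

section Construction

open Fin.CommRing

/-- The extremal clique in natural coordinates: the first `4 * m` vertices fill the blocks
`{3q, 3q + 1}²`, `q < m`, the next ones are `(3m, 3m)` and `(3m, 3m + 1)`. -/
def cliqueVertex (m i : ℕ) : ℕ × ℕ :=
  if i < 4 * m then (3 * (i / 4) + i % 4 / 2, 3 * (i / 4) + i % 4 % 2)
  else (3 * m, 3 * m + (i - 4 * m))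

theorem cliqueVertex_close_iff {m k i j : ℕ} (hk : k ≤ 2) (hi : i < 4 * m + k)
    (hj : j < 4 * m + k) :
    ((cliqueVertex m i).1 ≤ (cliqueVertex m j).1 + 1 ∧
        (cliqueVertex m j).1 ≤ (cliqueVertex m i).1 + 1) ↔
      ((cliqueVertex m i).2 ≤ (cliqueVertex m j).2 + 1 ∧
        (cliqueVertex m j).2 ≤ (cliqueVertex m i).2 + 1) := by
  unfold cliqueVertex
  split_ifs <;> simp only <;> omega

theorem cliqueVertex_injective (m : ℕ) : Function.Injective (cliqueVertex m) := by
  intro i j hij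
  revert hij
  unfold cliqueVertex
  split_ifs <;> simp only [Prod.mk.injEq] <;> omega

theorem exists_isClique_card_eq {s t : ℕ} [NeZero s] [NeZero t] (hst : s ≤ t) :
    ∃ C : Finset (Fin s × Fin t),
      (modularProduct (cycleGraph s) (cycleGraph t)).IsClique (C : Set (Fin s × Fin t)) ∧
      #C = 4 * (s / 3) + if s % 3 = 2 then (if s = t then 1 else 2) else 0 := by
  classical
  set m := s / 3 with hm
  have hk : (s % 3 ≠ 2 ∧ (if s % 3 = 2 then (if s = t then 1 else 2) else 0) = 0) ∨
      (s % 3 = 2 ∧ s = t ∧ (if s % 3 = 2 then (if s = t then 1 else 2) else 0) = 1) ∨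
      (s % 3 = 2 ∧ s < t ∧ (if s % 3 = 2 then (if s = t then 1 else 2) else 0) = 2) := by
    split_ifs <;> omega
  generalize (if s % 3 = 2 then (if s = t then 1 else 2) else 0) = k at hk ⊢
  have hbound (i : ℕ) (hi : i < 4 * m + k) :
      (cliqueVertex m i).1 + 1 < s ∧ (cliqueVertex m i).2 + 1 < t := by
    unfold cliqueVertex
    split_ifs <;> simp only <;> omega
  let F (i : ℕ) : Fin s × Fin t := ((cliqueVertex m i).1, (cliqueVertex m i).2)
  refine ⟨(range (4 * m + k)).image F, ?_, ?_⟩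
  · simp only [coe_image, coe_range]
    rintro _ ⟨i, hi, rfl⟩ _ ⟨j, hj, rfl⟩ hne
    obtain ⟨hi₁, hi₂⟩ := hbound i hi
    obtain ⟨hj₁, hj₂⟩ := hbound j hj
    rw [modularProduct_adj_iff, natCast_mem_closedNbr_cycleGraph_iff hi₁ hj₁,
      natCast_mem_closedNbr_cycleGraph_iff hi₂ hj₂]
    exact ⟨hne, cliqueVertex_close_iff (by omega) hi hj⟩
  · rw [card_image_of_injOn, card_range]
    intro i hi j hj hij
    simp only [coe_range, Set.mem_Iio] at hi hj
    obtain ⟨hi₁, hi₂⟩ := hbound i hi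
    obtain ⟨hj₁, hj₂⟩ := hbound j hj
    obtain ⟨h₁, h₂⟩ := Prod.mk.inj hij
    exact cliqueVertex_injective m (Prod.ext ((natCast_inj_of_lt (by omega) (by omega)).1 h₁)
      ((natCast_inj_of_lt (by omega) (by omega)).1 h₂))

end Construction

theorem cliqueNum_modularProduct_cycleGraph_of_le {s t : ℕ} [NeZero s] [NeZero t] (hs : 5 ≤ s)
    (hst : s ≤ t) :
    (modularProduct (cycleGraph s) (cycleGraph t)).cliqueNum =
      4 * (s / 3) + if s % 3 = 2 then (if s = t then 1 else 2) else 0 := by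
  obtain ⟨C, hC, hcard⟩ := exists_isClique_card_eq hst
  refine le_antisymm ?_ (hcard ▸ hC.card_le_cliqueNum)
  obtain ⟨K, hK⟩ := (modularProduct (cycleGraph s) (cycleGraph t)).exists_isNClique_cliqueNum
  rw [← hK.card_eq]
  have hle := card_le_of_isClique_modularProduct (by omega) (by omega) hK.isClique
  split_ifs at hle ⊢ with h2 hst'
  · subst hst'
    exact card_le_of_isClique_modularProduct_self hs h2 hK.isClique
  · exact hle
  · exact hle

theorem sdim_modularProduct_cycleGraph {s t : ℕ} [NeZero s] [NeZero t] (hs : 7 ≤ s)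
    (ht : 7 ≤ t) :
    sdim (modularProduct (cycleGraph s) (cycleGraph t)) =
      s * t - (modularProduct (cycleGraph s) (cycleGraph t)).cliqueNum := by
  have twin {n : ℕ} [NeZero n] (hn : 7 ≤ n) (a b : Fin n) (hab : (cycleGraph n).Adj a b) :
      closedNbr (cycleGraph n) a ≠ closedNbr (cycleGraph n) b :=
    (closedNbr_cycleGraph_injective (by omega)).ne hab.ne
  rw [sdim_eq_card_sub_cliqueNum (modularProduct_exists_common_adj
      (exists_notMem_closedNbr_cycleGraph hs) (exists_notMem_closedNbr_cycleGraph ht))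
    fun _ _ => modularProduct_closedNbr_ne (exists_notMem_closedNbr_cycleGraph hs)
      (exists_notMem_closedNbr_cycleGraph ht) (twin hs) (twin ht),
    Nat.card_prod, Nat.card_fin, Nat.card_fin]

/-- the strong metric dimension of the modular product of two cycles. -/
theorem sdim_cycle_modularProduct_cycle (s t r : ℕ) (hs : 7 ≤ s) (ht : 7 ≤ t)
    (hr : r = if min s t % 3 = 2 then (if s = t then 1 else 2) else 0) :
    sdim (modularProduct (cycleGraph s) (cycleGraph t)) =
      s * t - 4 * min (s / 3) (t / 3) - r := by
  have : NeZero s := ⟨by omega⟩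
  have : NeZero t := ⟨by omega⟩
  rw [sdim_modularProduct_cycleGraph hs ht, Nat.sub_sub, hr]
  congr 1
  rcases le_total s t with hst | hts
  · rw [cliqueNum_modularProduct_cycleGraph_of_le (by omega) hst, min_eq_left hst,
      min_eq_left (Nat.div_le_div_right hst)]
  · rw [cliqueNum_modularProduct_comm, cliqueNum_modularProduct_cycleGraph_of_le (by omega) hts,
      min_eq_right hts, min_eq_right (Nat.div_le_div_right hts)]
    simp only [eq_comm]
end

section
/- For integers n, m ≥ 3 and positive integers q_1,…,q_n, r_1,…,r_n, s_1,…,s_m, p_1,…,p_m, the strong metric dimension of the modular product satisfies dim_s( K_{n,n}^{−M}(q_1,…,q_n,r_1,…,r_n) ⋄ K_{m,m}^{−M}(s_1,…,s_m,p_1,…,p_m) ) = Σ_{i=1}^{n} ( (q_i + r_i) · Σ_{j=1}^{m} (s_j + p_j) ) − nm. -/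
open SimpleGraph

/-- `K_{n,n}^{-M}(q_1,…,q_n,r_1,…,r_n)`: the vertex `x_i` of `K_{n,n}` minus a perfect
matching is blown up into a clique on `q i` vertices and `y_i` into a clique on `r i`
vertices.  A vertex is a pair: a block `(i, b)` (side `b`, index `i`) together with a
vertex of the corresponding clique. -/
def blownBip (n : ℕ) (q r : Fin n → ℕ) :
    SimpleGraph (Σ p : Fin n × Bool, Fin (if p.2 then r p.1 else q p.1)) :=
  SimpleGraph.fromRel (fun u v => u.1 = v.1 ∨ (u.1.2 ≠ v.1.2 ∧ u.1.1 ≠ v.1.1))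

/-
Adjacency in `K_{n,n}^{-M}(q, r) ⋄ K_{m,m}^{-M}(s, p)` only depends on the pair `(i, j)` of
block indices and on the parity `σ xor θ` of the two sides: distinct vertices are adjacent iff
`(i = i' ↔ j = j') ↔ (σ xor θ = σ' xor θ')`. Inside a class `(i, j)`, two vertices of equal
parity are adjacent twins, and two vertices of opposite parity have no common neighbour, so they
lie at distance `3`, the diameter. Both kinds of pairs are mutually maximally distant, so a strong
resolving set omits at most one vertex per class. Conversely, omitting one vertex `u` per class
works, since every vertex of another class lies on a geodesic from `u` to a vertex of its own
class of the opposite parity.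
-/

namespace SimpleGraph

variable {V : Type*} {X : SimpleGraph V} {S : Set V} {u v : V}

lemma isStrongResolvingSet_of_forall_notMem
    (h : ∀ u v, u ∉ S → v ∉ S → u ≠ v → ∃ w ∈ S,
      X.dist u w = X.dist u v + X.dist v w ∨ X.dist v w = X.dist v u + X.dist u w) :
    IsStrongResolvingSet X S := by
  intro u v huv
  by_cases hu : u ∈ S
  · exact ⟨u, hu, Or.inr (by simp)⟩
  by_cases hv : v ∈ S
  · exact ⟨v, hv, Or.inl (by simp)⟩
  exact h u v hu hv huv

lemma IsStrongResolvingSet.mem_or_mem_of_adj_of_dist_eq (hS : IsStrongResolvingSet X S)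
    (huv : X.Adj u v) (htwin : ∀ w, w ≠ u → w ≠ v → X.dist u w = X.dist v w) :
    u ∈ S ∨ v ∈ S := by
  obtain ⟨w, hwS, hw⟩ := hS u v huv.ne
  by_cases hwu : w = u
  · exact .inl (hwu ▸ hwS)
  by_cases hwv : w = v
  · exact .inr (hwv ▸ hwS)
  have hd : X.dist u v = 1 := dist_eq_one_iff_adj.mpr huv
  rw [dist_comm (u := v) (v := u), hd, htwin w hwu hwv] at hw
  omega

lemma IsStrongResolvingSet.mem_or_mem_of_forall_dist_le (hS : IsStrongResolvingSet X S)
    (hconn : X.Preconnected) (huv : u ≠ v) (hmax : ∀ a b, X.dist a b ≤ X.dist u v) :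
    u ∈ S ∨ v ∈ S := by
  obtain ⟨w, hwS, hw | hw⟩ := hS u v huv
  · have : X.dist v w = 0 := by have := hmax u w; omega
    exact .inr (((hconn v w).dist_eq_zero_iff.mp this) ▸ hwS)
  · have : X.dist u w = 0 := by have := hmax v w; rw [dist_comm (u := v) (v := u)] at hw; omega
    exact .inl (((hconn u w).dist_eq_zero_iff.mp this) ▸ hwS)

end SimpleGraph

section

variable {V α β : Type*}

/-- `X` is obtained from the graph on `α × β × Bool` in which distinct `(a, b, c)` and
`(a', b', c')` are adjacent iff `(a = a' ↔ b = b') ↔ c = c'`, by blowing up every vertex into a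
nonempty clique. -/
structure IsParityBlowup (X : SimpleGraph V) (κ : V → α × β) (π : V → Bool) : Prop where
  adj_iff : ∀ x y, X.Adj x y ↔ x ≠ y ∧ (((κ x).1 = (κ y).1 ↔ (κ x).2 = (κ y).2) ↔ π x = π y)
  surjective : Function.Surjective fun x => (κ x, π x)

namespace IsParityBlowup

variable {X : SimpleGraph V} {κ : V → α × β} {π : V → Bool} {x y : V}

lemma commonNeighbors_nonempty (hX : IsParityBlowup X κ π) (hα : 3 ≤ ENat.card α)
    (hβ : 3 ≤ ENat.card β) (hκ : κ x ≠ κ y) (hxy : ¬ X.Adj x y) :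
    (X.commonNeighbors x y).Nonempty := by
  obtain ⟨a, hax, hay⟩ := ENat.exists_ne_ne_of_three_le hα (κ x).1 (κ y).1
  obtain ⟨b, hbx, hby⟩ := ENat.exists_ne_ne_of_three_le hβ (κ x).2 (κ y).2
  have hne : x ≠ y := fun h => hκ (h ▸ rfl)
  rw [hX.adj_iff] at hxy
  by_cases hπ : π x = π y
  · obtain ⟨z, hz⟩ := hX.surjective ((a, b), π x)
    simp only [Prod.mk.injEq] at hz
    refine ⟨z, ?_⟩
    rw [mem_commonNeighbors, hX.adj_iff, hX.adj_iff]
    grind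
  · obtain ⟨z, hz⟩ := hX.surjective ((a, (κ x).2), π y)
    simp only [Prod.mk.injEq] at hz
    refine ⟨z, ?_⟩
    rw [mem_commonNeighbors, hX.adj_iff, hX.adj_iff]
    grind [Prod.ext_iff]

lemma exists_adj_ne (hX : IsParityBlowup X κ π) [Nontrivial α] (x : V) :
    ∃ z, X.Adj x z ∧ κ z ≠ κ x := by
  obtain ⟨a, ha⟩ := exists_ne (κ x).1
  obtain ⟨z, hz⟩ := hX.surjective ((a, (κ x).2), !π x)
  simp only [Prod.mk.injEq] at hz
  refine ⟨z, ?_, ?_⟩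
  · rw [hX.adj_iff]
    grind
  · grind

lemma exists_walk_length_le_three (hX : IsParityBlowup X κ π) (hα : 3 ≤ ENat.card α)
    (hβ : 3 ≤ ENat.card β) (x y : V) : ∃ w : X.Walk x y, w.length ≤ 3 := by
  have short : ∀ x y, κ x ≠ κ y → ∃ w : X.Walk x y, w.length ≤ 2 := by
    intro x y hκ
    by_cases hxy : X.Adj x y
    · exact ⟨hxy.toWalk, by simp⟩
    obtain ⟨z, hz⟩ := hX.commonNeighbors_nonempty hα hβ hκ hxy
    obtain ⟨hxz, hyz⟩ := X.mem_commonNeighbors.mp hz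
    exact ⟨.cons hxz (.cons (X.adj_symm hyz) .nil), by simp⟩
  by_cases hκ : κ x = κ y
  · have : Nontrivial α :=
      (ENat.one_lt_card_iff_nontrivial α).mp (lt_of_lt_of_le (by norm_num) hα)
    obtain ⟨z, hxz, hz⟩ := hX.exists_adj_ne x
    obtain ⟨w, hw⟩ := short z y (hκ ▸ hz)
    exact ⟨.cons hxz w, by rw [Walk.length_cons]; omega⟩
  · obtain ⟨w, hw⟩ := short x y hκ
    exact ⟨w, by omega⟩

lemma preconnected (hX : IsParityBlowup X κ π) (hα : 3 ≤ ENat.card α) (hβ : 3 ≤ ENat.card β) :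
    X.Preconnected := fun x y =>
  ⟨(hX.exists_walk_length_le_three hα hβ x y).choose⟩

lemma dist_le_three (hX : IsParityBlowup X κ π) (hα : 3 ≤ ENat.card α) (hβ : 3 ≤ ENat.card β)
    (x y : V) : X.dist x y ≤ 3 :=
  let ⟨w, hw⟩ := hX.exists_walk_length_le_three hα hβ x y
  (dist_le w).trans hw

lemma dist_eq_two (hX : IsParityBlowup X κ π) (hα : 3 ≤ ENat.card α) (hβ : 3 ≤ ENat.card β)
    (hκ : κ x ≠ κ y) (hxy : ¬ X.Adj x y) : X.dist x y = 2 := by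
  have h : X.edist x y = 2 := edist_eq_two_iff.mpr
    ⟨fun h => hκ (h ▸ rfl), hxy, hX.commonNeighbors_nonempty hα hβ hκ hxy⟩
  rw [← (hX.preconnected hα hβ x y).coe_dist_eq_edist] at h
  exact_mod_cast h

lemma dist_eq_three (hX : IsParityBlowup X κ π) (hα : 3 ≤ ENat.card α) (hβ : 3 ≤ ENat.card β)
    (hκ : κ x = κ y) (hπ : π x ≠ π y) : X.dist x y = 3 := by
  have hne : x ≠ y := fun h => hπ (h ▸ rfl)
  have hxy : ¬ X.Adj x y := by
    rw [hX.adj_iff]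
    grind
  have hcommon : X.commonNeighbors x y = ∅ := by
    refine Set.eq_empty_iff_forall_notMem.mpr fun z hz => ?_
    rw [mem_commonNeighbors, hX.adj_iff, hX.adj_iff, hκ] at hz
    revert hπ hz
    cases π x <;> cases π y <;> cases π z <;> grind
  have h : 2 < X.edist x y := two_lt_edist_iff.mpr ⟨hne, hxy, hcommon⟩
  rw [← (hX.preconnected hα hβ x y).coe_dist_eq_edist] at h
  have := hX.dist_le_three hα hβ x y
  norm_cast at h
  omega

lemma adj_of_eq (hX : IsParityBlowup X κ π) (hκ : κ x = κ y) (hπ : π x = π y) (hne : x ≠ y) :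
    X.Adj x y := by
  simp [hX.adj_iff, hκ, hπ, hne]

lemma dist_eq_dist_of_eq (hX : IsParityBlowup X κ π) (hα : 3 ≤ ENat.card α)
    (hβ : 3 ≤ ENat.card β) {w : V} (hκ : κ x = κ y) (hπ : π x = π y) (hwx : w ≠ x)
    (hwy : w ≠ y) : X.dist x w = X.dist y w := by
  have hadj : X.Adj x w ↔ X.Adj y w := by
    simp only [hX.adj_iff, hκ, hπ, hwx.symm, hwy.symm, ne_eq, not_false_eq_true, true_and]
  by_cases hxw : X.Adj x w
  · rw [dist_eq_one_iff_adj.mpr hxw, dist_eq_one_iff_adj.mpr (hadj.mp hxw)]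
  by_cases hκw : κ x = κ w
  · have hπw : π x ≠ π w := fun h => hxw (hX.adj_of_eq hκw h hwx.symm)
    rw [hX.dist_eq_three hα hβ hκw hπw, hX.dist_eq_three hα hβ (hκ ▸ hκw) (hπ ▸ hπw)]
  · rw [hX.dist_eq_two hα hβ hκw hxw, hX.dist_eq_two hα hβ (hκ ▸ hκw) (hadj.not.mp hxw)]

lemma dist_add_dist_eq_three (hX : IsParityBlowup X κ π) (hα : 3 ≤ ENat.card α)
    (hβ : 3 ≤ ENat.card β) {w : V} (hκw : κ w = κ x) (hπw : π w ≠ π x) (hκy : κ y ≠ κ x) :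
    X.dist x y + X.dist y w = 3 := by
  have hyw : X.Adj y w ↔ ¬ X.Adj x y := by
    rw [hX.adj_iff, hX.adj_iff, hκw]
    revert hπw
    cases π x <;> cases π y <;> cases π w <;> grind
  by_cases hxy : X.Adj x y
  · rw [dist_eq_one_iff_adj.mpr hxy, hX.dist_eq_two hα hβ (hκw ▸ hκy) (hyw.not_left.mpr hxy)]
  · rw [hX.dist_eq_two hα hβ hκy.symm hxy, dist_eq_one_iff_adj.mpr (hyw.mpr hxy)]

lemma injOn_compl (hX : IsParityBlowup X κ π) (hα : 3 ≤ ENat.card α) (hβ : 3 ≤ ENat.card β)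
    {S : Set V} (hS : IsStrongResolvingSet X S) : Set.InjOn κ Sᶜ := by
  intro x hx y hy hκ
  by_contra hne
  have hmem : x ∈ S ∨ y ∈ S := by
    by_cases hπ : π x = π y
    · exact hS.mem_or_mem_of_adj_of_dist_eq (hX.adj_of_eq hκ hπ hne)
        fun w hwx hwy => hX.dist_eq_dist_of_eq hα hβ hκ hπ hwx hwy
    · exact hS.mem_or_mem_of_forall_dist_le (hX.preconnected hα hβ) hne fun a b =>
        (hX.dist_eq_three hα hβ hκ hπ).symm ▸ hX.dist_le_three hα hβ a b
  exact hmem.elim hx hy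

lemma isStrongResolvingSet_compl_range (hX : IsParityBlowup X κ π) (hα : 3 ≤ ENat.card α)
    (hβ : 3 ≤ ENat.card β) {ρ : α × β → V} (hρ : ∀ k, κ (ρ k) = k) :
    IsStrongResolvingSet X (Set.range ρ)ᶜ := by
  refine isStrongResolvingSet_of_forall_notMem fun x y hx hy hxy => ?_
  obtain ⟨k, rfl⟩ := not_not.mp hx
  obtain ⟨k', rfl⟩ := not_not.mp hy
  have hkk' : k ≠ k' := fun h => hxy (h ▸ rfl)
  obtain ⟨w, hw⟩ := hX.surjective (k, !π (ρ k))
  simp only [Prod.mk.injEq] at hw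
  have hwS : w ∉ Set.range ρ := by
    rintro ⟨k'', rfl⟩
    rw [hρ] at hw
    simp [hw.1] at hw
  have hκw : κ w = κ (ρ k) := by rw [hw.1, hρ]
  have hπw : π w ≠ π (ρ k) := by simp [hw.2]
  refine ⟨w, hwS, Or.inl ?_⟩
  rw [hX.dist_eq_three hα hβ hκw.symm hπw.symm,
    hX.dist_add_dist_eq_three hα hβ hκw hπw (by simpa [hρ] using hkk'.symm)]

theorem sdim_eq (hX : IsParityBlowup X κ π) (hα : 3 ≤ ENat.card α) (hβ : 3 ≤ ENat.card β)
    [Finite V] : sdim X = Nat.card V - Nat.card α * Nat.card β := by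
  set ρ : α × β → V := fun k => Function.surjInv hX.surjective (k, false)
  have hρ : ∀ k, κ (ρ k) = k := fun k => congrArg Prod.fst
    (Function.surjInv_eq hX.surjective (k, false))
  have : Finite (α × β) := Finite.of_surjective κ fun k => ⟨ρ k, hρ k⟩
  have hrange : (Set.range ρ).ncard = Nat.card α * Nat.card β := by
    rw [Set.ncard_range_of_injective (Function.LeftInverse.injective hρ), Nat.card_prod]
  refine IsLeast.csInf_eq ⟨⟨_, ?_, hX.isStrongResolvingSet_compl_range hα hβ hρ⟩, ?_⟩
  · have := Set.ncard_add_ncard_compl (Set.range ρ)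
    omega
  rintro _ ⟨S, rfl, hS⟩
  have hcompl : Sᶜ.ncard ≤ Nat.card α * Nat.card β := by
    rw [← Nat.card_prod, ← Set.ncard_univ]
    exact Set.ncard_le_ncard_of_injOn κ (fun _ _ => trivial) (hX.injOn_compl hα hβ hS)
  have := Set.ncard_add_ncard_compl S
  omega

end IsParityBlowup

end

lemma modularProduct_adj_iff_s14 {α β : Type*} (G : SimpleGraph α) (H : SimpleGraph β)
    (x y : α × β) : (modularProduct G H).Adj x y ↔
      x ≠ y ∧ ((x.1 = y.1 ∨ G.Adj x.1 y.1) ↔ (x.2 = y.2 ∨ H.Adj x.2 y.2)) := by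
  rw [modularProduct, fromRel_adj]
  grind [SimpleGraph.adj_symm, Prod.ext_iff]

lemma blownBip_eq_or_adj_iff {n : ℕ} {q r : Fin n → ℕ}
    (u v : Σ p : Fin n × Bool, Fin (if p.2 then r p.1 else q p.1)) :
    (u = v ∨ (blownBip n q r).Adj u v) ↔ (u.1.1 = v.1.1 ↔ u.1.2 = v.1.2) := by
  rw [blownBip, fromRel_adj]
  grind [Prod.ext_iff]

lemma natCard_blownBip (n : ℕ) (q r : Fin n → ℕ) :
    Nat.card (Σ p : Fin n × Bool, Fin (if p.2 then r p.1 else q p.1)) = ∑ i, (q i + r i) := by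
  simp [Nat.card_eq_fintype_card, Fintype.card_sigma, Fintype.sum_prod_type, add_comm]

lemma isParityBlowup_modularProduct_blownBip {n m : ℕ} {q r : Fin n → ℕ} {s p : Fin m → ℕ}
    (hq : ∀ i, 1 ≤ q i) (hr : ∀ i, 1 ≤ r i) (hs : ∀ j, 1 ≤ s j) :
    IsParityBlowup (modularProduct (blownBip n q r) (blownBip m s p))
      (fun x => (x.1.1.1, x.2.1.1)) (fun x => xor x.1.1.2 x.2.1.2) where
  adj_iff x y := by
    rw [modularProduct_adj_iff_s14, blownBip_eq_or_adj_iff, blownBip_eq_or_adj_iff]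
    cases x.1.1.2 <;> cases y.1.1.2 <;> cases x.2.1.2 <;> cases y.2.1.2 <;> grind
  surjective := by
    rintro ⟨⟨i, j⟩, c⟩
    refine ⟨(⟨(i, c), ⟨0, ?_⟩⟩, ⟨(j, false), ⟨0, hs j⟩⟩), by simp⟩
    cases c
    exacts [hq i, hr i]

theorem sdim_blownBip_modularProduct_general (n m : ℕ) (hn : 3 ≤ n) (hm : 3 ≤ m)
    (q r : Fin n → ℕ) (s p : Fin m → ℕ)
    (hq : ∀ i, 1 ≤ q i) (hr : ∀ i, 1 ≤ r i) (hs : ∀ j, 1 ≤ s j) :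
    sdim (modularProduct (blownBip n q r) (blownBip m s p)) =
      (∑ i : Fin n, (q i + r i) * (∑ j : Fin m, (s j + p j))) - n * m := by
  rw [(isParityBlowup_modularProduct_blownBip hq hr hs).sdim_eq (by simpa using hn)
      (by simpa using hm), Nat.card_prod, natCard_blownBip, natCard_blownBip, Nat.card_fin,
    Nat.card_fin, Finset.sum_mul]

/-- the strong metric dimension of the modular product of two blown-up
complete bipartite graphs minus perfect matchings. -/
theorem sdim_blownBip_modularProduct (n m : ℕ) (hn : 3 ≤ n) (hm : 3 ≤ m)
    (q r : Fin n → ℕ) (s p : Fin m → ℕ)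
    (hq : ∀ i, 1 ≤ q i) (hr : ∀ i, 1 ≤ r i) (hs : ∀ j, 1 ≤ s j) (hp : ∀ j, 1 ≤ p j) :
    sdim (modularProduct (blownBip n q r) (blownBip m s p)) =
      (∑ i : Fin n, (q i + r i) * (∑ j : Fin m, (s j + p j))) - n * m :=
  sdim_blownBip_modularProduct_general n m hn hm q r s p hq hr hs
end
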